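/- arXiv:math/0404124 — 3 statements merged into one kernel-verified Lean document; each statement's English description precedes it below -/
import Mathlib

section
/- Let E be an elliptic curve over ℚ given by a Weierstrass equation with integer coefficients, and let Q be a non-torsion rational point on E. For each nonzero integer n, write x(nQ) = A_n / B_n^2 in lowest terms with A_n, B_n integers and B_n > 0. Then B is a divisibility sequence: for all positive integers m and n, if m divides n then B_m divides B_n. -/
set_option linter.unusedSectionVars false
set_option maxHeartbeats 4000000

section Val
variable (p : ℕ) [hp : Fact p.Prime]

noncomputable def qv (q : ℚ) : WithTop ℤ := if q = 0 then ⊤ else (padicValRat p q : WithTop ℤ)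

variable {p}

@[simp] lemma qv_zero : qv p 0 = ⊤ := if_pos rfl

lemma qv_of_ne {q : ℚ} (h : q ≠ 0) : qv p q = (padicValRat p q : WithTop ℤ) := if_neg h

lemma qv_ne_top {q : ℚ} (h : q ≠ 0) : qv p q ≠ ⊤ := by
  rw [qv_of_ne h]; exact WithTop.coe_ne_top

@[simp] lemma qv_one : qv p 1 = 0 := by
  rw [qv_of_ne one_ne_zero]; simp [padicValRat.one]

lemma qv_mul (a b : ℚ) : qv p (a * b) = qv p a + qv p b := by
  rcases eq_or_ne a 0 with rfl | ha
  · simp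
  rcases eq_or_ne b 0 with rfl | hb
  · simp
  rw [qv_of_ne (mul_ne_zero ha hb), qv_of_ne ha, qv_of_ne hb, padicValRat.mul ha hb]
  push_cast; rfl

@[simp] lemma qv_neg (a : ℚ) : qv p (-a) = qv p a := by
  rcases eq_or_ne a 0 with rfl | ha
  · simp
  rw [qv_of_ne (neg_ne_zero.mpr ha), qv_of_ne ha, padicValRat.neg]

lemma qv_inv (a : ℚ) : qv p a⁻¹ = - qv p a := by
  rcases eq_or_ne a 0 with rfl | ha
  · simp
  rw [qv_of_ne (inv_ne_zero ha), qv_of_ne ha, padicValRat.inv]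
  push_cast; rfl

lemma qv_intCast_nonneg (n : ℤ) : 0 ≤ qv p (n : ℚ) := by
  rcases eq_or_ne n 0 with rfl | hn
  · simp
  rw [qv_of_ne (by exact_mod_cast hn), padicValRat.of_int, padicValInt]
  exact_mod_cast Int.ofNat_nonneg _


lemma qv_pow {a : ℚ} (ha : a ≠ 0) (n : ℕ) :
    qv p (a^n) = (((n : ℤ) * padicValRat p a : ℤ) : WithTop ℤ) := by
  rw [qv_of_ne (pow_ne_zero n ha), padicValRat.pow (p := p) (q := a)]

lemma min_le_qv_add (a b : ℚ) : min (qv p a) (qv p b) ≤ qv p (a + b) := by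
  rcases eq_or_ne a 0 with rfl | ha
  · simp
  rcases eq_or_ne b 0 with rfl | hb
  · simp
  rcases eq_or_ne (a + b) 0 with hab | hab
  · rw [hab]; simp
  rw [qv_of_ne ha, qv_of_ne hb, qv_of_ne hab]
  have := padicValRat.min_le_padicValRat_add (p := p) hab
  rw [← WithTop.coe_min]
  exact_mod_cast this

lemma le_qv_add {c : WithTop ℤ} {a b : ℚ} (ha : c ≤ qv p a) (hb : c ≤ qv p b) :
    c ≤ qv p (a + b) :=
  le_trans (le_min ha hb) (min_le_qv_add a b)

lemma le_qv_sub {c : WithTop ℤ} {a b : ℚ} (ha : c ≤ qv p a) (hb : c ≤ qv p b) :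
    c ≤ qv p (a - b) := by
  rw [sub_eq_add_neg]
  exact le_qv_add ha (by simpa using hb)

lemma qv_add_eq_left {a b : ℚ} (h : qv p a < qv p b) : qv p (a + b) = qv p a := by
  refine le_antisymm ?_ (by simpa using le_qv_add le_rfl h.le)
  by_contra hlt
  push_neg at hlt
  have h3 : qv p a < qv p (a + b + (-b)) :=
    lt_of_lt_of_le (lt_min hlt (by simpa using h)) (min_le_qv_add _ _)
  rw [add_neg_cancel_right] at h3
  exact lt_irrefl _ h3

lemma le_qv_int_mul (k : ℤ) (a : ℚ) : qv p a ≤ qv p ((k : ℚ) * a) := by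
  rw [qv_mul]
  exact le_add_of_nonneg_left (qv_intCast_nonneg k)

lemma le_qv_int_mul' {c : WithTop ℤ} {a : ℚ} (k : ℤ) (h : c ≤ qv p a) :
    c ≤ qv p ((k : ℚ) * a) := le_trans h (le_qv_int_mul k a)

/-- On an integral Weierstrass curve, a point with `v(x) < 0` has `v(x) = -2σ`, `v(y) = -3σ`. -/
lemma qv_sigma_exists (a₁ a₂ a₃ a₄ a₆ : ℤ) (x y : ℚ)
    (hE : y^2 + a₁*x*y + a₃*y = x^3 + a₂*x^2 + a₄*x + a₆)
    (hvx : qv p x < 0) :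
    ∃ σ : ℤ, 0 < σ ∧ qv p x = ((-2*σ : ℤ) : WithTop ℤ) ∧ qv p y = ((-3*σ : ℤ) : WithTop ℤ) := by
  have hx0 : x ≠ 0 := by
    rintro rfl; rw [qv_zero] at hvx; exact absurd hvx (by simp)
  set ux := padicValRat p x with hux
  have hqx : qv p x = (ux : WithTop ℤ) := qv_of_ne hx0
  have huxneg : ux < 0 := by
    rw [hqx] at hvx; exact_mod_cast hvx
  -- y ≠ 0
  have hy0 : y ≠ 0 := by
    rintro rfl
    have h0 : (0 : ℚ) = x^3 + (a₂*x^2 + (a₄*x + a₆)) := by linear_combination hE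
    have hcube : qv p (x^3) = ((3*ux : ℤ) : WithTop ℤ) := by
      rw [qv_pow hx0 3, ← hux]; norm_num
    have hrest : ((2*ux : ℤ) : WithTop ℤ) ≤ qv p (a₂*x^2 + (a₄*x + a₆)) := by
      refine le_qv_add (le_qv_int_mul' a₂ ?_) (le_qv_add (le_qv_int_mul' a₄ ?_) ?_)
      · rw [qv_pow hx0 2]; exact_mod_cast (by linarith : 2*ux ≤ 2*ux)
      · rw [hqx]; exact_mod_cast (by linarith : 2*ux ≤ ux)
      · exact le_trans (by exact_mod_cast (by linarith : 2*ux ≤ 0)) (qv_intCast_nonneg a₆)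
    have : qv p (x^3 + (a₂*x^2 + (a₄*x + a₆))) = ((3*ux : ℤ) : WithTop ℤ) := by
      rw [qv_add_eq_left, hcube]
      rw [hcube]
      exact lt_of_lt_of_le (by exact_mod_cast (by linarith : 3*ux < 2*ux)) hrest
    rw [← h0, qv_zero] at this
    exact absurd this.symm WithTop.coe_ne_top
  set uy := padicValRat p y with huy
  have hqy : qv p y = (uy : WithTop ℤ) := qv_of_ne hy0
  have hysq : qv p (y^2) = ((2*uy : ℤ) : WithTop ℤ) := by
    rw [qv_pow hy0 2, ← huy]; norm_num
  have hcube : qv p (x^3) = ((3*ux : ℤ) : WithTop ℤ) := by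
    rw [qv_pow hx0 3, ← hux]; norm_num
  -- rule out 2uy < 3ux
  have hcase1 : ¬ (2*uy < 3*ux) := by
    intro hlt
    have h0 : y^2 = -(↑a₁*x*y) + (-(↑a₃*y) + (x^3 + (↑a₂*x^2 + (↑a₄*x + ↑a₆)))) := by
      linear_combination hE
    have hbound : ((2*uy + 1 : ℤ) : WithTop ℤ) ≤ qv p (-(↑a₁*x*y) + (-(↑a₃*y) + (x^3 + (↑a₂*x^2 + (↑a₄*x + ↑a₆))))) := by
      refine le_qv_add ?_ (le_qv_add ?_ (le_qv_add ?_ (le_qv_add ?_ (le_qv_add ?_ ?_))))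
      · rw [qv_neg, mul_assoc]
        refine le_qv_int_mul' a₁ ?_
        rw [qv_mul, hqx, hqy]
        exact_mod_cast (by linarith : 2*uy + 1 ≤ ux + uy)
      · rw [qv_neg]
        refine le_qv_int_mul' a₃ ?_
        rw [hqy]; exact_mod_cast (by linarith : 2*uy + 1 ≤ uy)
      · rw [hcube]; exact_mod_cast (by linarith : 2*uy + 1 ≤ 3*ux)
      · refine le_qv_int_mul' a₂ ?_
        rw [qv_pow hx0 2]
        exact_mod_cast (by linarith : 2*uy+1 ≤ 2*ux)
      · refine le_qv_int_mul' a₄ ?_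
        rw [hqx]; exact_mod_cast (by linarith : 2*uy + 1 ≤ ux)
      · exact le_trans (by exact_mod_cast (by linarith : 2*uy+1 ≤ 0)) (qv_intCast_nonneg a₆)
    rw [← h0, hysq] at hbound
    exact absurd hbound (by exact_mod_cast (by linarith : ¬ (2*uy + 1 ≤ 2*uy)))
  -- rule out 3ux < 2uy
  have hcase2 : ¬ (3*ux < 2*uy) := by
    intro hlt
    have h0 : x^3 = y^2 + (↑a₁*x*y + (↑a₃*y + (-(↑a₂*x^2) + (-(↑a₄*x) + -(↑a₆:ℚ))))) := by
      linear_combination -hE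
    have hbound : ((3*ux + 1 : ℤ) : WithTop ℤ) ≤ qv p (y^2 + (↑a₁*x*y + (↑a₃*y + (-(↑a₂*x^2) + (-(↑a₄*x) + -(↑a₆:ℚ)))))) := by
      refine le_qv_add ?_ (le_qv_add ?_ (le_qv_add ?_ (le_qv_add ?_ (le_qv_add ?_ ?_))))
      · rw [hysq]; exact_mod_cast (by linarith : 3*ux + 1 ≤ 2*uy)
      · rw [mul_assoc]
        refine le_qv_int_mul' a₁ ?_
        rw [qv_mul, hqx, hqy]
        exact_mod_cast (by linarith : 3*ux + 1 ≤ ux + uy)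
      · refine le_qv_int_mul' a₃ ?_
        rw [hqy]; exact_mod_cast (by linarith : 3*ux + 1 ≤ uy)
      · rw [qv_neg]
        refine le_qv_int_mul' a₂ ?_
        rw [qv_pow hx0 2]
        exact_mod_cast (by linarith : 3*ux+1 ≤ 2*ux)
      · rw [qv_neg]
        refine le_qv_int_mul' a₄ ?_
        rw [hqx]; exact_mod_cast (by linarith : 3*ux + 1 ≤ ux)
      · rw [qv_neg]
        exact le_trans (by exact_mod_cast (by linarith : 3*ux+1 ≤ 0)) (qv_intCast_nonneg a₆)
    rw [← h0, hcube] at hbound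
    exact absurd hbound (by exact_mod_cast (by linarith : ¬ (3*ux + 1 ≤ 3*ux)))
  have heq : 2*uy = 3*ux := by omega
  refine ⟨ux - uy, by omega, ?_, ?_⟩
  · rw [hqx]; congr 1; omega
  · rw [hqy]; congr 1; omega

lemma qv_ne_zero_of_coe {a : ℚ} {k : ℤ} (h : qv p a = (k : WithTop ℤ)) : a ≠ 0 := by
  rintro rfl; rw [qv_zero] at h; exact WithTop.top_ne_coe h

lemma qv_one_add {z : ℚ} (h : 0 < qv p z) : qv p (1 + z) = 0 := by
  have h1 : qv p (1:ℚ) < qv p z := by rw [qv_one]; exact h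
  rw [qv_add_eq_left h1, qv_one]

lemma qv_val_of_ne {a : ℚ} (ha : a ≠ 0) {k : ℤ} (h : qv p a = (k : WithTop ℤ)) :
    padicValRat p a = k := by
  rw [qv_of_ne ha] at h
  exact_mod_cast h

lemma qv_div {a b : ℚ} (ha : a ≠ 0) (hb : b ≠ 0) :
    qv p (a / b) = ((padicValRat p a - padicValRat p b : ℤ) : WithTop ℤ) := by
  rw [qv_of_ne (div_ne_zero ha hb), padicValRat.div ha hb]

/-- Core valuation estimate for the `x`-coordinate of a sum of two points deep in the
`p`-adic filtration. Everything is phrased in raw coordinates. -/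
lemma addX_val_le (a₁ a₂ a₃ a₄ a₆ : ℤ) {x₁ y₁ x₂ y₂ L x₃ y₃ : ℚ} {s : ℤ} (hs : 1 ≤ s)
    (hE₁ : y₁^2 + a₁*x₁*y₁ + a₃*y₁ = x₁^3 + a₂*x₁^2 + a₄*x₁ + a₆)
    (hE₂ : y₂^2 + a₁*x₂*y₂ + a₃*y₂ = x₂^3 + a₂*x₂^2 + a₄*x₂ + a₆)
    (hE₃ : y₃^2 + a₁*x₃*y₃ + a₃*y₃ = x₃^3 + a₂*x₃^2 + a₄*x₃ + a₆)
    (hx₃ : x₃ = L^2 + a₁*L - a₂ - x₁ - x₂)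
    (hy₃ : y₃ = L*(x₃ - x₁) + y₁)
    (hslope : (x₁ = x₂ ∧ y₁ = y₂ ∧ L*(2*y₁ + a₁*x₁ + a₃) = 3*x₁^2 + 2*a₂*x₁ + a₄ - a₁*y₁)
      ∨ (x₁ ≠ x₂ ∧ L*(x₁ - x₂) = y₁ - y₂))
    (he₂ : x₁*x₂ + x₁*x₃ + x₂*x₃ = a₄ - 2*L*(y₁ - L*x₁) - a₁*(y₁ - L*x₁) - a₃*L)
    (he₃ : x₁*x₂*x₃ = (y₁ - L*x₁)^2 + a₃*(y₁ - L*x₁) - a₆)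
    (hv₁ : qv p x₁ ≤ ((-2*s : ℤ) : WithTop ℤ))
    (hv₂ : qv p x₂ ≤ ((-2*s : ℤ) : WithTop ℤ)) :

    qv p x₃ ≤ ((-2*s : ℤ) : WithTop ℤ) := by
  have hs0 : (0:ℤ) < s := by omega
  have hvx₁ : qv p x₁ < 0 := lt_of_le_of_lt hv₁ (by exact_mod_cast (by omega : (-2*s:ℤ) < 0))
  have hvx₂ : qv p x₂ < 0 := lt_of_le_of_lt hv₂ (by exact_mod_cast (by omega : (-2*s:ℤ) < 0))
  obtain ⟨σ₁, hσ₁, hqx₁, hqy₁⟩ := qv_sigma_exists a₁ a₂ a₃ a₄ a₆ x₁ y₁ hE₁ hvx₁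
  obtain ⟨σ₂, hσ₂, hqx₂, hqy₂⟩ := qv_sigma_exists a₁ a₂ a₃ a₄ a₆ x₂ y₂ hE₂ hvx₂
  have hx₁0 : x₁ ≠ 0 := qv_ne_zero_of_coe hqx₁
  have hy₁0 : y₁ ≠ 0 := qv_ne_zero_of_coe hqy₁
  have hx₂0 : x₂ ≠ 0 := qv_ne_zero_of_coe hqx₂
  have hy₂0 : y₂ ≠ 0 := qv_ne_zero_of_coe hqy₂
  have hσ₁s : s ≤ σ₁ := by
    rw [hqx₁] at hv₁; have := WithTop.coe_le_coe.mp hv₁; omega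
  have hσ₂s : s ≤ σ₂ := by
    rw [hqx₂] at hv₂; have := WithTop.coe_le_coe.mp hv₂; omega
  have hpx₁ : padicValRat p x₁ = -2*σ₁ := qv_val_of_ne hx₁0 hqx₁
  have hpy₁ : padicValRat p y₁ = -3*σ₁ := qv_val_of_ne hy₁0 hqy₁
  have hpx₂ : padicValRat p x₂ = -2*σ₂ := qv_val_of_ne hx₂0 hqx₂
  have hpy₂ : padicValRat p y₂ = -3*σ₂ := qv_val_of_ne hy₂0 hqy₂
  set ν : ℚ := y₁ - L*x₁ with hν
  set t₁ : ℚ := -x₁/y₁ with ht₁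
  set w₁ : ℚ := -1/y₁ with hw₁
  set t₂ : ℚ := -x₂/y₂ with ht₂
  set w₂ : ℚ := -1/y₂ with hw₂
  have ht₁0 : t₁ ≠ 0 := by rw [ht₁]; exact div_ne_zero (neg_ne_zero.mpr hx₁0) hy₁0
  have hw₁0 : w₁ ≠ 0 := by rw [hw₁]; exact div_ne_zero (neg_ne_zero.mpr one_ne_zero) hy₁0
  have ht₂0 : t₂ ≠ 0 := by rw [ht₂]; exact div_ne_zero (neg_ne_zero.mpr hx₂0) hy₂0
  have hw₂0 : w₂ ≠ 0 := by rw [hw₂]; exact div_ne_zero (neg_ne_zero.mpr one_ne_zero) hy₂0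
  have hpt₁ : padicValRat p t₁ = σ₁ := by
    have : qv p t₁ = ((σ₁ : ℤ) : WithTop ℤ) := by
      rw [ht₁, neg_div, qv_neg, qv_div hx₁0 hy₁0, hpx₁, hpy₁]; congr 1; ring
    exact qv_val_of_ne ht₁0 this
  have hpw₁ : padicValRat p w₁ = 3*σ₁ := by
    have : qv p w₁ = ((3*σ₁ : ℤ) : WithTop ℤ) := by
      rw [hw₁, neg_div, qv_neg, qv_div one_ne_zero hy₁0, padicValRat.one, hpy₁]; congr 1; ring
    exact qv_val_of_ne hw₁0 this
  have hpt₂ : padicValRat p t₂ = σ₂ := by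
    have : qv p t₂ = ((σ₂ : ℤ) : WithTop ℤ) := by
      rw [ht₂, neg_div, qv_neg, qv_div hx₂0 hy₂0, hpx₂, hpy₂]; congr 1; ring
    exact qv_val_of_ne ht₂0 this
  have hpw₂ : padicValRat p w₂ = 3*σ₂ := by
    have : qv p w₂ = ((3*σ₂ : ℤ) : WithTop ℤ) := by
      rw [hw₂, neg_div, qv_neg, qv_div one_ne_zero hy₂0, padicValRat.one, hpy₂]; congr 1; ring
    exact qv_val_of_ne hw₂0 this
  have hqt₁ : qv p t₁ = ((σ₁:ℤ) : WithTop ℤ) := by rw [qv_of_ne ht₁0, hpt₁]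
  have hqw₁ : qv p w₁ = ((3*σ₁:ℤ) : WithTop ℤ) := by rw [qv_of_ne hw₁0, hpw₁]
  have hqt₂ : qv p t₂ = ((σ₂:ℤ) : WithTop ℤ) := by rw [qv_of_ne ht₂0, hpt₂]
  have hqw₂ : qv p w₂ = ((3*σ₂:ℤ) : WithTop ℤ) := by rw [qv_of_ne hw₂0, hpw₂]
  -- the tw-curve equations
  have hFgen : ∀ x y : ℚ, y ≠ 0 →
      y^2 + a₁*x*y + a₃*y = x^3 + a₂*x^2 + a₄*x + a₆ →
      (-1/y) = (-x/y)^3 + a₁*(-x/y)*(-1/y) + a₂*(-x/y)^2*(-1/y) + a₃*(-1/y)^2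
        + a₄*(-x/y)*(-1/y)^2 + a₆*(-1/y)^3 := by
    intro x y hy0 hE
    have hid : (-1/y) - ((-x/y)^3 + a₁*(-x/y)*(-1/y) + a₂*(-x/y)^2*(-1/y) + a₃*(-1/y)^2
          + a₄*(-x/y)*(-1/y)^2 + a₆*(-1/y)^3)
        = (-(1/y^3)) * (y^2 + a₁*x*y + a₃*y - (x^3 + a₂*x^2 + a₄*x + a₆)) := by
      field_simp; ring
    have hz : y^2 + (a₁:ℚ)*x*y + a₃*y - (x^3 + a₂*x^2 + a₄*x + a₆) = 0 := by
      linear_combination hE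
    rw [hz, mul_zero] at hid
    linarith [hid]
  have hF₁ : w₁ = t₁^3 + a₁*t₁*w₁ + a₂*t₁^2*w₁ + a₃*w₁^2 + a₄*t₁*w₁^2 + a₆*w₁^3 := by
    rw [ht₁, hw₁]; exact hFgen x₁ y₁ hy₁0 hE₁
  have hF₂ : w₂ = t₂^3 + a₁*t₂*w₂ + a₂*t₂^2*w₂ + a₃*w₂^2 + a₄*t₂*w₂^2 + a₆*w₂^3 := by
    rw [ht₂, hw₂]; exact hFgen x₂ y₂ hy₂0 hE₂
  -- case analysis on the slope: in both cases we get ν ≠ 0, v(μ) ≥ 2s, and y₂ on the line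
  obtain ⟨hν0, hqμ, hy₂l⟩ :
      ν ≠ 0 ∧ (((2*s : ℤ) : WithTop ℤ) ≤ qv p (-L/ν)) ∧ y₂ = L*x₂ + ν := by
    rcases hslope with ⟨hx12, hy12, hL⟩ | ⟨hx12, hL⟩
    · -- tangent case
      have hν0 : ν ≠ 0 := by
        intro hν0
        have hyLx : y₁ = L*x₁ := by rw [hν] at hν0; linarith [sub_eq_zero.mp hν0]
        have hT0 : x₁^3 = a₄*x₁ - a₃*(L*x₁) + 2*a₆ := by
          linear_combination 2*hE₁ - x₁*hL - (a₁*x₁ + 2*a₃ + 2*y₁)*hyLx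
        have hL0 : L ≠ 0 := by
          intro h0; rw [h0, zero_mul] at hyLx; exact hy₁0 hyLx
        have hpL : padicValRat p L = -σ₁ := by
          have : L = y₁ / x₁ := by field_simp [hyLx]; exact hyLx.symm
          rw [this, padicValRat.div hy₁0 hx₁0, hpy₁, hpx₁]; ring
        have hq3 : qv p (x₁^3) = ((-6*σ₁ : ℤ) : WithTop ℤ) := by
          rw [qv_pow hx₁0 3, hpx₁]; congr 1; ring
        have hbound : ((-3*σ₁ : ℤ) : WithTop ℤ) ≤ qv p (a₄*x₁ - a₃*(L*x₁) + 2*a₆) := by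
          refine le_qv_add (le_qv_sub (le_qv_int_mul' a₄ ?_) (le_qv_int_mul' a₃ ?_)) ?_
          · rw [qv_of_ne hx₁0, hpx₁]; exact_mod_cast (by omega : (-3*σ₁:ℤ) ≤ -2*σ₁)
          · rw [qv_mul, qv_of_ne (by intro h; exact hL0 h : L ≠ 0), qv_of_ne hx₁0, hpL, hpx₁]
            exact_mod_cast (by omega : (-3*σ₁:ℤ) ≤ -σ₁ + -2*σ₁)
          · refine le_trans ?_ (le_qv_int_mul 2 ((a₆:ℚ)))
            exact le_trans (by exact_mod_cast (by omega : (-3*σ₁:ℤ) ≤ 0)) (qv_intCast_nonneg a₆)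
        rw [← hT0, hq3] at hbound
        have := WithTop.coe_le_coe.mp hbound
        omega
      refine ⟨hν0, ?_, by rw [← hx12, ← hy12, hν]; ring⟩
      -- v(μ) ≥ 2s via the tangent line in (t,w)-coordinates
      have hDy : (1 - a₁*t₁ - a₂*t₁^2 - 2*a₃*w₁ - 2*a₄*t₁*w₁ - 3*a₆*w₁^2) * y₁^2
          = y₁^2 + a₁*x₁*y₁ - a₂*x₁^2 + 2*a₃*y₁ - 2*a₄*x₁ - 3*a₆ := by
        rw [ht₁, hw₁]; field_simp; ring
      have hNy : (3*t₁^2 + a₁*w₁ + 2*a₂*t₁*w₁ + a₄*w₁^2) * y₁^2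
          = 3*x₁^2 + 2*a₂*x₁ + a₄ - a₁*y₁ := by
        rw [ht₁, hw₁]; field_simp; ring
      have hTμ : -L*(y₁^2 + a₁*x₁*y₁ - a₂*x₁^2 + 2*a₃*y₁ - 2*a₄*x₁ - 3*a₆)
          = ν*(3*x₁^2 + 2*a₂*x₁ + a₄ - a₁*y₁) := by
        rw [hν]; linear_combination (-3*L)*hE₁ + y₁*hL
      have hμD : (-L/ν) * (1 - a₁*t₁ - a₂*t₁^2 - 2*a₃*w₁ - 2*a₄*t₁*w₁ - 3*a₆*w₁^2)
          = 3*t₁^2 + a₁*w₁ + 2*a₂*t₁*w₁ + a₄*w₁^2 := by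
        have h2 : ν * y₁^2 ≠ 0 := mul_ne_zero hν0 (pow_ne_zero 2 hy₁0)
        apply mul_right_cancel₀ h2
        calc (-L/ν) * (1 - a₁*t₁ - a₂*t₁^2 - 2*a₃*w₁ - 2*a₄*t₁*w₁ - 3*a₆*w₁^2) * (ν * y₁^2)
            = -L * ((1 - a₁*t₁ - a₂*t₁^2 - 2*a₃*w₁ - 2*a₄*t₁*w₁ - 3*a₆*w₁^2) * y₁^2) := by
              field_simp
          _ = -L*(y₁^2 + a₁*x₁*y₁ - a₂*x₁^2 + 2*a₃*y₁ - 2*a₄*x₁ - 3*a₆) := by rw [hDy]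
          _ = ν*(3*x₁^2 + 2*a₂*x₁ + a₄ - a₁*y₁) := hTμ
          _ = ν*((3*t₁^2 + a₁*w₁ + 2*a₂*t₁*w₁ + a₄*w₁^2) * y₁^2) := by rw [hNy]
          _ = (3*t₁^2 + a₁*w₁ + 2*a₂*t₁*w₁ + a₄*w₁^2) * (ν * y₁^2) := by ring
      -- valuation of the bracket is zero
      have hqD : qv p (1 - a₁*t₁ - a₂*t₁^2 - 2*a₃*w₁ - 2*a₄*t₁*w₁ - 3*a₆*w₁^2) = 0 := by
        have hz : ((1:ℤ) : WithTop ℤ) ≤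
            qv p (- (a₁*t₁) - a₂*t₁^2 - 2*a₃*w₁ - 2*a₄*t₁*w₁ - 3*a₆*w₁^2) := by
          refine le_qv_sub (le_qv_sub (le_qv_sub (le_qv_sub ?_ ?_) ?_) ?_) ?_
          · rw [qv_neg]
            refine le_qv_int_mul' a₁ ?_
            rw [hqt₁]; exact_mod_cast (by omega : (1:ℤ) ≤ σ₁)
          · refine le_qv_int_mul' a₂ ?_
            rw [qv_pow ht₁0 2, hpt₁]; exact_mod_cast (by omega : (1:ℤ) ≤ 2*σ₁)
          · rw [show (2:ℚ)*(a₃:ℚ)*w₁ = ((2*a₃ : ℤ):ℚ)*w₁ by push_cast; ring]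
            refine le_qv_int_mul' (2*a₃) ?_
            rw [hqw₁]; exact_mod_cast (by omega : (1:ℤ) ≤ 3*σ₁)
          · rw [show (2:ℚ)*(a₄:ℚ)*t₁*w₁ = ((2*a₄ : ℤ):ℚ)*(t₁*w₁) by push_cast; ring]
            refine le_qv_int_mul' (2*a₄) ?_
            rw [qv_mul, hqt₁, hqw₁]; exact_mod_cast (by omega : (1:ℤ) ≤ σ₁ + 3*σ₁)
          · rw [show (3:ℚ)*(a₆:ℚ)*w₁^2 = ((3*a₆ : ℤ):ℚ)*w₁^2 by push_cast; ring]
            refine le_qv_int_mul' (3*a₆) ?_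
            rw [qv_pow hw₁0 2, hpw₁]; exact_mod_cast (by omega : (1:ℤ) ≤ 2*(3*σ₁))
        have hform : 1 - a₁*t₁ - a₂*t₁^2 - 2*a₃*w₁ - 2*a₄*t₁*w₁ - 3*a₆*w₁^2
            = 1 + (- (a₁*t₁) - a₂*t₁^2 - 2*a₃*w₁ - 2*a₄*t₁*w₁ - 3*a₆*w₁^2) := by ring
        rw [hform]
        exact qv_one_add (lt_of_lt_of_le (by exact_mod_cast (by omega : (0:ℤ) < 1)) hz)
      have hqN : ((2*s : ℤ) : WithTop ℤ) ≤ qv p (3*t₁^2 + a₁*w₁ + 2*a₂*t₁*w₁ + a₄*w₁^2) := by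
        refine le_qv_add (le_qv_add (le_qv_add ?_ ?_) ?_) ?_
        · rw [show (3:ℚ)*t₁^2 = ((3:ℤ):ℚ)*t₁^2 by push_cast; ring]
          refine le_qv_int_mul' 3 ?_
          rw [qv_pow ht₁0 2, hpt₁]; exact_mod_cast (by omega : (2*s:ℤ) ≤ 2*σ₁)
        · refine le_qv_int_mul' a₁ ?_
          rw [hqw₁]; exact_mod_cast (by omega : (2*s:ℤ) ≤ 3*σ₁)
        · rw [show (2:ℚ)*(a₂:ℚ)*t₁*w₁ = ((2*a₂ : ℤ):ℚ)*(t₁*w₁) by push_cast; ring]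
          refine le_qv_int_mul' (2*a₂) ?_
          rw [qv_mul, hqt₁, hqw₁]; exact_mod_cast (by omega : (2*s:ℤ) ≤ σ₁ + 3*σ₁)
        · refine le_qv_int_mul' a₄ ?_
          rw [qv_pow hw₁0 2, hpw₁]; exact_mod_cast (by omega : (2*s:ℤ) ≤ 2*(3*σ₁))
      calc ((2*s : ℤ) : WithTop ℤ) ≤ qv p (3*t₁^2 + a₁*w₁ + 2*a₂*t₁*w₁ + a₄*w₁^2) := hqN
        _ = qv p ((-L/ν) * (1 - a₁*t₁ - a₂*t₁^2 - 2*a₃*w₁ - 2*a₄*t₁*w₁ - 3*a₆*w₁^2)) := by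
            rw [hμD]
        _ = qv p (-L/ν) + 0 := by rw [qv_mul, hqD]
        _ = qv p (-L/ν) := by rw [add_zero]
    · -- secant case
      have hΔ : (w₂ - w₁) * (1 - a₁*t₂ - a₂*t₂^2 - a₃*w₁ - a₃*w₂ - a₄*t₂*w₁ - a₄*t₂*w₂
            - a₆*w₁^2 - a₆*w₁*w₂ - a₆*w₂^2)
          = (t₂ - t₁) * (t₁^2 + t₁*t₂ + t₂^2 + a₁*w₁ + a₂*w₁*t₁ + a₂*w₁*t₂ + a₄*w₁^2) := by
        linear_combination hF₂ - hF₁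
      have hqD : qv p (1 - a₁*t₂ - a₂*t₂^2 - a₃*w₁ - a₃*w₂ - a₄*t₂*w₁ - a₄*t₂*w₂
            - a₆*w₁^2 - a₆*w₁*w₂ - a₆*w₂^2) = 0 := by
        have hz : ((1:ℤ) : WithTop ℤ) ≤
            qv p (- (a₁*t₂) - a₂*t₂^2 - a₃*w₁ - a₃*w₂ - a₄*t₂*w₁ - a₄*t₂*w₂
              - a₆*w₁^2 - a₆*w₁*w₂ - a₆*w₂^2) := by
          refine le_qv_sub (le_qv_sub (le_qv_sub (le_qv_sub (le_qv_sub (le_qv_sub (le_qv_sub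
            (le_qv_sub ?_ ?_) ?_) ?_) ?_) ?_) ?_) ?_) ?_
          · rw [qv_neg]
            refine le_qv_int_mul' a₁ ?_
            rw [hqt₂]; exact_mod_cast (by omega : (1:ℤ) ≤ σ₂)
          · refine le_qv_int_mul' a₂ ?_
            rw [qv_pow ht₂0 2, hpt₂]; exact_mod_cast (by omega : (1:ℤ) ≤ 2*σ₂)
          · refine le_qv_int_mul' a₃ ?_
            rw [hqw₁]; exact_mod_cast (by omega : (1:ℤ) ≤ 3*σ₁)
          · refine le_qv_int_mul' a₃ ?_
            rw [hqw₂]; exact_mod_cast (by omega : (1:ℤ) ≤ 3*σ₂)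
          · rw [show (a₄:ℚ)*t₂*w₁ = ((a₄ : ℤ):ℚ)*(t₂*w₁) by push_cast; ring]
            refine le_qv_int_mul' a₄ ?_
            rw [qv_mul, hqt₂, hqw₁]; exact_mod_cast (by omega : (1:ℤ) ≤ σ₂ + 3*σ₁)
          · rw [show (a₄:ℚ)*t₂*w₂ = ((a₄ : ℤ):ℚ)*(t₂*w₂) by push_cast; ring]
            refine le_qv_int_mul' a₄ ?_
            rw [qv_mul, hqt₂, hqw₂]; exact_mod_cast (by omega : (1:ℤ) ≤ σ₂ + 3*σ₂)
          · refine le_qv_int_mul' a₆ ?_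
            rw [qv_pow hw₁0 2, hpw₁]; exact_mod_cast (by omega : (1:ℤ) ≤ 2*(3*σ₁))
          · rw [show (a₆:ℚ)*w₁*w₂ = ((a₆ : ℤ):ℚ)*(w₁*w₂) by push_cast; ring]
            refine le_qv_int_mul' a₆ ?_
            rw [qv_mul, hqw₁, hqw₂]; exact_mod_cast (by omega : (1:ℤ) ≤ 3*σ₁ + 3*σ₂)
          · refine le_qv_int_mul' a₆ ?_
            rw [qv_pow hw₂0 2, hpw₂]; exact_mod_cast (by omega : (1:ℤ) ≤ 2*(3*σ₂))
        have hform : 1 - a₁*t₂ - a₂*t₂^2 - a₃*w₁ - a₃*w₂ - a₄*t₂*w₁ - a₄*t₂*w₂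
              - a₆*w₁^2 - a₆*w₁*w₂ - a₆*w₂^2
            = 1 + (- (a₁*t₂) - a₂*t₂^2 - a₃*w₁ - a₃*w₂ - a₄*t₂*w₁ - a₄*t₂*w₂
              - a₆*w₁^2 - a₆*w₁*w₂ - a₆*w₂^2) := by ring
        rw [hform]
        exact qv_one_add (lt_of_lt_of_le (by exact_mod_cast (by omega : (0:ℤ) < 1)) hz)
      have hD0 : (1 - a₁*t₂ - a₂*t₂^2 - a₃*w₁ - a₃*w₂ - a₄*t₂*w₁ - a₄*t₂*w₂
            - a₆*w₁^2 - a₆*w₁*w₂ - a₆*w₂^2) ≠ 0 := by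
        intro h0; rw [h0, qv_zero] at hqD; exact WithTop.top_ne_coe hqD
      have ht12 : t₁ ≠ t₂ := by
        intro ht
        have hw12 : w₂ = w₁ := by
          have h0 : (w₂ - w₁) * (1 - a₁*t₂ - a₂*t₂^2 - a₃*w₁ - a₃*w₂ - a₄*t₂*w₁ - a₄*t₂*w₂
              - a₆*w₁^2 - a₆*w₁*w₂ - a₆*w₂^2) = 0 := by rw [hΔ, ht]; ring
          have := mul_eq_zero.mp h0
          rcases this with h | h
          · linarith [sub_eq_zero.mp h]
          · exact absurd h hD0
        have hy12 : y₁ = y₂ := by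
          rw [hw₁, hw₂] at hw12
          field_simp at hw12
          linarith
        apply hx12
        rw [ht₁, ht₂, hy12] at ht
        field_simp at ht
        exact neg_inj.mp ht
      have hν0 : ν ≠ 0 := by
        intro h0
        have hy1 : y₁ = L*x₁ := by rw [hν] at h0; linarith [sub_eq_zero.mp h0]
        have hy2 : y₂ = L*x₂ := by linear_combination hy1 + hL
        have hL0 : L ≠ 0 := by
          intro h; rw [h, zero_mul] at hy1; exact hy₁0 hy1
        apply ht12
        rw [ht₁, ht₂, hy1, hy2]
        field_simp
      have hy₂l : y₂ = L*x₂ + ν := by rw [hν]; linear_combination hL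
      refine ⟨hν0, ?_, hy₂l⟩
      have h1 : (w₂ - w₁)*(y₁*y₂) = y₂ - y₁ := by
        rw [hw₁, hw₂]; field_simp; ring
      have h2 : (t₂ - t₁)*(y₁*y₂) = x₁*y₂ - x₂*y₁ := by
        rw [ht₁, ht₂]; field_simp; ring
      have h3 : x₁*y₂ - x₂*y₁ = ν*(x₁ - x₂) := by
        linear_combination x₁*hy₂l + x₂*hν
      have hμt : (-L/ν) * (t₂ - t₁) = w₂ - w₁ := by
        have hnz : ν * (y₁*y₂) ≠ 0 := mul_ne_zero hν0 (mul_ne_zero hy₁0 hy₂0)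
        apply mul_right_cancel₀ hnz
        calc (-L/ν) * (t₂ - t₁) * (ν * (y₁*y₂))
            = -L * ((t₂ - t₁)*(y₁*y₂)) := by field_simp
          _ = -L * (x₁*y₂ - x₂*y₁) := by rw [h2]
          _ = -L * (ν*(x₁ - x₂)) := by rw [h3]
          _ = ν * (-(L * (x₁ - x₂))) := by ring
          _ = ν * (-(y₁ - y₂)) := by rw [hL]
          _ = ν * (y₂ - y₁) := by ring
          _ = ν * ((w₂ - w₁)*(y₁*y₂)) := by rw [h1]
          _ = (w₂ - w₁) * (ν * (y₁*y₂)) := by ring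
      have hμD : (-L/ν) * (1 - a₁*t₂ - a₂*t₂^2 - a₃*w₁ - a₃*w₂ - a₄*t₂*w₁ - a₄*t₂*w₂
            - a₆*w₁^2 - a₆*w₁*w₂ - a₆*w₂^2)
          = t₁^2 + t₁*t₂ + t₂^2 + a₁*w₁ + a₂*w₁*t₁ + a₂*w₁*t₂ + a₄*w₁^2 := by
        have ht12' : t₂ - t₁ ≠ 0 := sub_ne_zero.mpr (Ne.symm ht12)
        apply mul_right_cancel₀ ht12'
        calc (-L/ν) * (1 - a₁*t₂ - a₂*t₂^2 - a₃*w₁ - a₃*w₂ - a₄*t₂*w₁ - a₄*t₂*w₂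
              - a₆*w₁^2 - a₆*w₁*w₂ - a₆*w₂^2) * (t₂ - t₁)
            = ((-L/ν) * (t₂ - t₁)) * (1 - a₁*t₂ - a₂*t₂^2 - a₃*w₁ - a₃*w₂ - a₄*t₂*w₁ - a₄*t₂*w₂
              - a₆*w₁^2 - a₆*w₁*w₂ - a₆*w₂^2) := by ring
          _ = (w₂ - w₁) * (1 - a₁*t₂ - a₂*t₂^2 - a₃*w₁ - a₃*w₂ - a₄*t₂*w₁ - a₄*t₂*w₂
              - a₆*w₁^2 - a₆*w₁*w₂ - a₆*w₂^2) := by rw [hμt]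
          _ = (t₂ - t₁) * (t₁^2 + t₁*t₂ + t₂^2 + a₁*w₁ + a₂*w₁*t₁ + a₂*w₁*t₂ + a₄*w₁^2) := hΔ
          _ = (t₁^2 + t₁*t₂ + t₂^2 + a₁*w₁ + a₂*w₁*t₁ + a₂*w₁*t₂ + a₄*w₁^2) * (t₂ - t₁) := by
              ring
      have hqN : ((2*s : ℤ) : WithTop ℤ) ≤
          qv p (t₁^2 + t₁*t₂ + t₂^2 + a₁*w₁ + a₂*w₁*t₁ + a₂*w₁*t₂ + a₄*w₁^2) := by
        refine le_qv_add (le_qv_add (le_qv_add (le_qv_add (le_qv_add (le_qv_add ?_ ?_) ?_) ?_)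
          ?_) ?_) ?_
        · rw [qv_pow ht₁0 2, hpt₁]; exact_mod_cast (by omega : (2*s:ℤ) ≤ 2*σ₁)
        · rw [qv_mul, hqt₁, hqt₂]; exact_mod_cast (by omega : (2*s:ℤ) ≤ σ₁ + σ₂)
        · rw [qv_pow ht₂0 2, hpt₂]; exact_mod_cast (by omega : (2*s:ℤ) ≤ 2*σ₂)
        · refine le_qv_int_mul' a₁ ?_
          rw [hqw₁]; exact_mod_cast (by omega : (2*s:ℤ) ≤ 3*σ₁)
        · rw [show (a₂:ℚ)*w₁*t₁ = ((a₂ : ℤ):ℚ)*(w₁*t₁) by push_cast; ring]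
          refine le_qv_int_mul' a₂ ?_
          rw [qv_mul, hqw₁, hqt₁]; exact_mod_cast (by omega : (2*s:ℤ) ≤ 3*σ₁ + σ₁)
        · rw [show (a₂:ℚ)*w₁*t₂ = ((a₂ : ℤ):ℚ)*(w₁*t₂) by push_cast; ring]
          refine le_qv_int_mul' a₂ ?_
          rw [qv_mul, hqw₁, hqt₂]; exact_mod_cast (by omega : (2*s:ℤ) ≤ 3*σ₁ + σ₂)
        · refine le_qv_int_mul' a₄ ?_
          rw [qv_pow hw₁0 2, hpw₁]; exact_mod_cast (by omega : (2*s:ℤ) ≤ 2*(3*σ₁))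
      calc ((2*s : ℤ) : WithTop ℤ)
          ≤ qv p (t₁^2 + t₁*t₂ + t₂^2 + a₁*w₁ + a₂*w₁*t₁ + a₂*w₁*t₂ + a₄*w₁^2) := hqN
        _ = qv p ((-L/ν) * (1 - a₁*t₂ - a₂*t₂^2 - a₃*w₁ - a₃*w₂ - a₄*t₂*w₁ - a₄*t₂*w₂
              - a₆*w₁^2 - a₆*w₁*w₂ - a₆*w₂^2)) := by rw [hμD]
        _ = qv p (-L/ν) + 0 := by rw [qv_mul, hqD]
        _ = qv p (-L/ν) := by rw [add_zero]
  -- unified conclusion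
  have hy₁l : y₁ = L*x₁ + ν := by rw [hν]; ring
  have hy₃l : y₃ = L*x₃ + ν := by rw [hν]; linear_combination hy₃
  have hqμ1 : ((1:ℤ) : WithTop ℤ) ≤ qv p (-L/ν) :=
    le_trans (by exact_mod_cast (by omega : (1:ℤ) ≤ 2*s)) hqμ
  have hqμ0 : (0 : WithTop ℤ) ≤ qv p (-L/ν) :=
    le_trans (by exact_mod_cast (by omega : (0:ℤ) ≤ 2*s)) hqμ
  have hcid : (-1/ν) = w₁ - (-L/ν)*t₁ := by
    rw [hw₁, ht₁]
    have hν0' : y₁ - L*x₁ ≠ 0 := by rw [← hν]; exact hν0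
    rw [hν]
    field_simp
    ring
  have hqc : ((3*s : ℤ) : WithTop ℤ) ≤ qv p (-1/ν) := by
    rw [hcid]
    refine le_qv_sub ?_ ?_
    · rw [hqw₁]; exact_mod_cast (by omega : (3*s:ℤ) ≤ 3*σ₁)
    · rw [qv_mul]
      have h1 : ((2*s : ℤ) : WithTop ℤ) + ((s : ℤ) : WithTop ℤ) ≤ qv p (-L/ν) + qv p t₁ :=
        add_le_add hqμ (by rw [hqt₁]; exact_mod_cast hσ₁s)
      refine le_trans (le_of_eq ?_) h1
      rw [← WithTop.coe_add]; congr 1; ring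
  have hqc0 : (0 : WithTop ℤ) ≤ qv p (-1/ν) :=
    le_trans (by exact_mod_cast (by omega : (0:ℤ) ≤ 3*s)) hqc
  have hqc1 : ((1:ℤ) : WithTop ℤ) ≤ qv p (-1/ν) :=
    le_trans (by exact_mod_cast (by omega : (1:ℤ) ≤ 3*s)) hqc
  -- y₃ ≠ 0
  have hy₃0 : y₃ ≠ 0 := by
    intro h0
    have hx₃nonneg : (0 : WithTop ℤ) ≤ qv p x₃ := by
      by_contra hneg
      push_neg at hneg
      obtain ⟨σ₃, _, _, hqy₃⟩ := qv_sigma_exists a₁ a₂ a₃ a₄ a₆ x₃ y₃ hE₃ hneg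
      rw [h0, qv_zero] at hqy₃
      exact WithTop.top_ne_coe hqy₃
    have hLx : L*x₃ = -ν := by
      have := hy₃l; rw [h0] at this; linarith
    have hμx : (-L/ν) * x₃ = 1 := by
      rw [neg_div, neg_mul, div_mul_eq_mul_div, hLx]
      field_simp
    have h1 : qv p ((-L/ν) * x₃) = 0 := by rw [hμx, qv_one]
    rw [qv_mul] at h1
    have hge : ((2*s:ℤ) : WithTop ℤ) + 0 ≤ qv p (-L/ν) + qv p x₃ := add_le_add hqμ hx₃nonneg
    rw [h1, add_zero] at hge
    have : (2*s : ℤ) ≤ 0 := by exact_mod_cast hge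
    omega
  set t₃ : ℚ := -x₃/y₃ with ht₃
  set w₃ : ℚ := -1/y₃ with hw₃
  have hw₃0 : w₃ ≠ 0 := by rw [hw₃]; exact div_ne_zero (neg_ne_zero.mpr one_ne_zero) hy₃0
  have he₁ : x₁ + x₂ + x₃ = L^2 + a₁*L - a₂ := by linear_combination hx₃
  have hprod : y₁*y₂*y₃ = L^3*(ν^2 + a₃*ν - a₆) + L^2*ν*(a₄ - 2*L*ν - a₁*ν - a₃*L)
      + L*ν^2*(L^2 + a₁*L - a₂) + ν^3 := by
    rw [hy₁l, hy₂l, hy₃l]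
    linear_combination L^3*he₃ + L^2*ν*he₂ + L*ν^2*he₁
  have hsum : x₁*y₂*y₃ + x₂*y₁*y₃ + x₃*y₁*y₂ = 3*L^2*(ν^2 + a₃*ν - a₆)
      + 2*L*ν*(a₄ - 2*L*ν - a₁*ν - a₃*L) + ν^2*(L^2 + a₁*L - a₂) := by
    rw [hy₁l, hy₂l, hy₃l]
    linear_combination 3*L^2*he₃ + 2*L*ν*he₂ + ν^2*he₁
  have hT : t₁ + t₂ + t₃ = -(x₁*y₂*y₃ + x₂*y₁*y₃ + x₃*y₁*y₂)/(y₁*y₂*y₃) := by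
    rw [ht₁, ht₂, ht₃]
    field_simp
    ring
  have hSid : (t₁ + t₂ + t₃) * (1 + a₂*(-L/ν) + a₄*(-L/ν)^2 + a₆*(-L/ν)^3)
      = -(a₁*(-L/ν) + a₂*(-1/ν) + a₃*(-L/ν)^2 + 2*a₄*((-L/ν)*(-1/ν))
        + 3*a₆*((-L/ν)^2*(-1/ν))) := by
    rw [hT, hsum, hprod]
    have hden : L^3*(ν^2 + a₃*ν - a₆) + L^2*ν*(a₄ - 2*L*ν - a₁*ν - a₃*L)
        + L*ν^2*(L^2 + a₁*L - a₂) + ν^3 ≠ 0 := by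
      rw [← hprod]
      exact mul_ne_zero (mul_ne_zero hy₁0 hy₂0) hy₃0
    generalize hD : L^3*(ν^2 + a₃*ν - a₆) + L^2*ν*(a₄ - 2*L*ν - a₁*ν - a₃*L)
        + L*ν^2*(L^2 + a₁*L - a₂) + ν^3 = D at hden ⊢
    field_simp
    subst hD
    ring
  have hqbr : qv p (1 + (a₂*(-L/ν) + a₄*(-L/ν)^2 + a₆*(-L/ν)^3)) = 0 := by
    have hz : ((1:ℤ) : WithTop ℤ) ≤ qv p (a₂*(-L/ν) + a₄*(-L/ν)^2 + a₆*(-L/ν)^3) := by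
      refine le_qv_add (le_qv_add ?_ ?_) ?_
      · exact le_qv_int_mul' a₂ hqμ1
      · refine le_qv_int_mul' a₄ ?_
        rw [pow_two, qv_mul]
        calc ((1:ℤ) : WithTop ℤ) = ((1:ℤ) : WithTop ℤ) + 0 := by rw [add_zero]
          _ ≤ qv p (-L/ν) + qv p (-L/ν) := add_le_add hqμ1 hqμ0
      · refine le_qv_int_mul' a₆ ?_
        rw [pow_succ, pow_two, qv_mul, qv_mul]
        calc ((1:ℤ) : WithTop ℤ) = ((1:ℤ) : WithTop ℤ) + 0 + 0 := by rw [add_zero, add_zero]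
            _ ≤ qv p (-L/ν) + qv p (-L/ν) + qv p (-L/ν) :=
                add_le_add (add_le_add hqμ1 hqμ0) hqμ0
    exact qv_one_add (lt_of_lt_of_le (by exact_mod_cast (by omega : (0:ℤ) < 1)) hz)
  have hqrhs : ((2*s : ℤ) : WithTop ℤ) ≤ qv p (-(a₁*(-L/ν) + a₂*(-1/ν) + a₃*(-L/ν)^2
      + 2*a₄*((-L/ν)*(-1/ν)) + 3*a₆*((-L/ν)^2*(-1/ν)))) := by
    rw [qv_neg]
    refine le_qv_add (le_qv_add (le_qv_add (le_qv_add ?_ ?_) ?_) ?_) ?_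
    · exact le_qv_int_mul' a₁ hqμ
    · refine le_qv_int_mul' a₂ (le_trans ?_ hqc)
      exact_mod_cast (by omega : (2*s:ℤ) ≤ 3*s)
    · refine le_qv_int_mul' a₃ ?_
      rw [pow_two, qv_mul]
      calc ((2*s:ℤ) : WithTop ℤ) = ((2*s:ℤ) : WithTop ℤ) + 0 := by rw [add_zero]
        _ ≤ qv p (-L/ν) + qv p (-L/ν) := add_le_add hqμ hqμ0
    · rw [show (2:ℚ)*(a₄:ℚ)*((-L/ν)*(-1/ν)) = ((2*a₄ : ℤ):ℚ)*((-L/ν)*(-1/ν)) by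
        push_cast; ring]
      refine le_qv_int_mul' (2*a₄) ?_
      rw [qv_mul]
      calc ((2*s:ℤ) : WithTop ℤ) = ((2*s:ℤ) : WithTop ℤ) + 0 := by rw [add_zero]
        _ ≤ qv p (-L/ν) + qv p (-1/ν) := add_le_add hqμ hqc0
    · rw [show (3:ℚ)*(a₆:ℚ)*((-L/ν)^2*(-1/ν)) = ((3*a₆ : ℤ):ℚ)*((-L/ν)^2*(-1/ν)) by
        push_cast; ring]
      refine le_qv_int_mul' (3*a₆) ?_
      rw [qv_mul, pow_two, qv_mul]
      calc ((2*s:ℤ) : WithTop ℤ) = ((2*s:ℤ) : WithTop ℤ) + 0 + 0 := by rw [add_zero, add_zero]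
        _ ≤ qv p (-L/ν) + qv p (-L/ν) + qv p (-1/ν) :=
            add_le_add (add_le_add hqμ hqμ0) hqc0
  have hqsum : ((2*s : ℤ) : WithTop ℤ) ≤ qv p (t₁ + t₂ + t₃) := by
    calc ((2*s : ℤ) : WithTop ℤ)
        ≤ qv p (-(a₁*(-L/ν) + a₂*(-1/ν) + a₃*(-L/ν)^2 + 2*a₄*((-L/ν)*(-1/ν))
          + 3*a₆*((-L/ν)^2*(-1/ν)))) := hqrhs
      _ = qv p ((t₁ + t₂ + t₃) * (1 + (a₂*(-L/ν) + a₄*(-L/ν)^2 + a₆*(-L/ν)^3))) := by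
          rw [show (t₁ + t₂ + t₃) * (1 + (a₂*(-L/ν) + a₄*(-L/ν)^2 + a₆*(-L/ν)^3))
            = (t₁ + t₂ + t₃) * (1 + a₂*(-L/ν) + a₄*(-L/ν)^2 + a₆*(-L/ν)^3) by ring, hSid]
      _ = qv p (t₁ + t₂ + t₃) + 0 := by rw [qv_mul, hqbr]
      _ = qv p (t₁ + t₂ + t₃) := by rw [add_zero]
  have hqt₃ : ((s : ℤ) : WithTop ℤ) ≤ qv p t₃ := by
    rw [show t₃ = (t₁ + t₂ + t₃) - t₁ - t₂ by ring]
    refine le_qv_sub (le_qv_sub ?_ ?_) ?_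
    · exact le_trans (by exact_mod_cast (by omega : (s:ℤ) ≤ 2*s)) hqsum
    · rw [hqt₁]; exact_mod_cast hσ₁s
    · rw [hqt₂]; exact_mod_cast hσ₂s
  have hw₃l : w₃ = (-L/ν)*t₃ + (-1/ν) := by
    have hkey : (-1 : ℚ)/y₃ * (ν*y₃) = ((-L/ν)*(-x₃/y₃) + (-1/ν)) * (ν*y₃) := by
      have h1 : (-1 : ℚ)/y₃ * (ν*y₃) = -ν := by field_simp
      have h2 : ((-L/ν)*(-x₃/y₃) + (-1/ν)) * (ν*y₃) = L*x₃ - y₃ := by field_simp; ring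
      rw [h1, h2]; linear_combination hy₃l
    rw [hw₃, ht₃]
    exact mul_right_cancel₀ (mul_ne_zero hν0 hy₃0) hkey
  have hqw₃ : ((3*s : ℤ) : WithTop ℤ) ≤ qv p w₃ := by
    rw [hw₃l]
    refine le_qv_add ?_ hqc
    rw [qv_mul]
    have h1 : ((2*s : ℤ) : WithTop ℤ) + ((s : ℤ) : WithTop ℤ) ≤ qv p (-L/ν) + qv p t₃ :=
      add_le_add hqμ hqt₃
    refine le_trans (le_of_eq ?_) h1
    rw [← WithTop.coe_add]; congr 1; ring
  have hqw₃1 : ((1:ℤ) : WithTop ℤ) ≤ qv p w₃ :=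
    le_trans (by exact_mod_cast (by omega : (1:ℤ) ≤ 3*s)) hqw₃
  have hqw₃0 : (0 : WithTop ℤ) ≤ qv p w₃ :=
    le_trans (by exact_mod_cast (by omega : (0:ℤ) ≤ 3*s)) hqw₃
  have hqt₃1 : ((1:ℤ) : WithTop ℤ) ≤ qv p t₃ :=
    le_trans (by exact_mod_cast (by omega : (1:ℤ) ≤ s)) hqt₃
  have hqt₃0 : (0 : WithTop ℤ) ≤ qv p t₃ :=
    le_trans (by exact_mod_cast (by omega : (0:ℤ) ≤ s)) hqt₃
  have hF₃ : w₃ = t₃^3 + a₁*t₃*w₃ + a₂*t₃^2*w₃ + a₃*w₃^2 + a₄*t₃*w₃^2 + a₆*w₃^3 := by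
    rw [ht₃, hw₃]; exact hFgen x₃ y₃ hy₃0 hE₃
  have hfac : w₃ * (1 - a₁*t₃ - a₂*t₃^2 - a₃*w₃ - a₄*t₃*w₃ - a₆*w₃^2) = t₃^3 := by
    linear_combination hF₃
  have hqbr₃ : qv p (1 - a₁*t₃ - a₂*t₃^2 - a₃*w₃ - a₄*t₃*w₃ - a₆*w₃^2) = 0 := by
    rw [show (1 : ℚ) - a₁*t₃ - a₂*t₃^2 - a₃*w₃ - a₄*t₃*w₃ - a₆*w₃^2
      = 1 + (-(a₁*t₃) - a₂*t₃^2 - a₃*w₃ - a₄*t₃*w₃ - a₆*w₃^2) by ring]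
    have hz : ((1:ℤ) : WithTop ℤ) ≤ qv p (-(a₁*t₃) - a₂*t₃^2 - a₃*w₃ - a₄*t₃*w₃ - a₆*w₃^2) := by
      refine le_qv_sub (le_qv_sub (le_qv_sub (le_qv_sub ?_ ?_) ?_) ?_) ?_
      · rw [qv_neg]; exact le_qv_int_mul' a₁ hqt₃1
      · refine le_qv_int_mul' a₂ ?_
        rw [pow_two, qv_mul]
        calc ((1:ℤ) : WithTop ℤ) = ((1:ℤ) : WithTop ℤ) + 0 := by rw [add_zero]
          _ ≤ qv p t₃ + qv p t₃ := add_le_add hqt₃1 hqt₃0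
      · exact le_qv_int_mul' a₃ hqw₃1
      · rw [show (a₄:ℚ)*t₃*w₃ = ((a₄:ℤ):ℚ)*(t₃*w₃) by push_cast; ring]
        refine le_qv_int_mul' a₄ ?_
        rw [qv_mul]
        calc ((1:ℤ) : WithTop ℤ) = ((1:ℤ) : WithTop ℤ) + 0 := by rw [add_zero]
          _ ≤ qv p t₃ + qv p w₃ := add_le_add hqt₃1 hqw₃0
      · refine le_qv_int_mul' a₆ ?_
        rw [pow_two, qv_mul]
        calc ((1:ℤ) : WithTop ℤ) = ((1:ℤ) : WithTop ℤ) + 0 := by rw [add_zero]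
          _ ≤ qv p w₃ + qv p w₃ := add_le_add hqw₃1 hqw₃0
    exact qv_one_add (lt_of_lt_of_le (by exact_mod_cast (by omega : (0:ℤ) < 1)) hz)
  have hbr₃0 : (1 : ℚ) - a₁*t₃ - a₂*t₃^2 - a₃*w₃ - a₄*t₃*w₃ - a₆*w₃^2 ≠ 0 := by
    intro h0; rw [h0, qv_zero] at hqbr₃; exact WithTop.top_ne_coe hqbr₃
  have ht₃0 : t₃ ≠ 0 := by
    intro h0
    have h1 : t₃^3 ≠ 0 := by rw [← hfac]; exact mul_ne_zero hw₃0 hbr₃0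
    exact h1 (by rw [h0]; ring)
  have hpt₃s : s ≤ padicValRat p t₃ := by
    rw [qv_of_ne ht₃0] at hqt₃; exact_mod_cast hqt₃
  have hqw₃exact : qv p w₃ = ((3*padicValRat p t₃ : ℤ) : WithTop ℤ) := by
    have h1 : qv p w₃ = qv p (t₃^3) := by
      rw [← hfac, qv_mul, hqbr₃, add_zero]
    rw [h1, qv_pow ht₃0 3]
    norm_num
  have hpw₃ : padicValRat p w₃ = 3*padicValRat p t₃ := qv_val_of_ne hw₃0 hqw₃exact
  have hx₃t : x₃ = t₃ / w₃ := by
    rw [ht₃, hw₃]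
    field_simp
  rw [hx₃t, qv_div ht₃0 hw₃0, hpw₃]
  exact_mod_cast (by omega : padicValRat p t₃ - 3*padicValRat p t₃ ≤ -2*s)


open WeierstrassCurve.Affine Polynomial in
/-- Curve-level wrapper of the valuation estimate. -/
lemma addX_val_le_W {W : WeierstrassCurve.Affine ℚ} (a₁ a₂ a₃ a₄ a₆ : ℤ)
    (ha₁ : W.a₁ = a₁) (ha₂ : W.a₂ = a₂) (ha₃ : W.a₃ = a₃) (ha₄ : W.a₄ = a₄) (ha₆ : W.a₆ = a₆)
    {x₁ y₁ x₂ y₂ : ℚ} (h₁ : W.Nonsingular x₁ y₁) (h₂ : W.Nonsingular x₂ y₂)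
    (hxy : x₁ = x₂ → y₁ ≠ W.negY x₂ y₂) {s : ℤ} (hs : 1 ≤ s)
    (hv₁ : qv p x₁ ≤ ((-2*s : ℤ) : WithTop ℤ)) (hv₂ : qv p x₂ ≤ ((-2*s : ℤ) : WithTop ℤ)) :
    qv p (W.addX x₁ x₂ (W.slope x₁ x₂ y₁ y₂)) ≤ ((-2*s : ℤ) : WithTop ℤ) := by
  set L : ℚ := W.slope x₁ x₂ y₁ y₂ with hLdef
  set x₃ : ℚ := W.addX x₁ x₂ L with hx₃def
  set y₃ : ℚ := W.negAddY x₁ x₂ y₁ L with hy₃def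
  have hE₁ : y₁^2 + (a₁:ℚ)*x₁*y₁ + a₃*y₁ = x₁^3 + a₂*x₁^2 + a₄*x₁ + a₆ := by
    have := (W.equation_iff x₁ y₁).mp h₁.1
    rw [ha₁, ha₂, ha₃, ha₄, ha₆] at this
    linear_combination this
  have hE₂ : y₂^2 + (a₁:ℚ)*x₂*y₂ + a₃*y₂ = x₂^3 + a₂*x₂^2 + a₄*x₂ + a₆ := by
    have := (W.equation_iff x₂ y₂).mp h₂.1
    rw [ha₁, ha₂, ha₃, ha₄, ha₆] at this
    linear_combination this
  have hE₃' : W.Equation x₃ y₃ := equation_negAdd h₁.1 h₂.1 (fun h => hxy h.1 h.2)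
  have hE₃ : y₃^2 + (a₁:ℚ)*x₃*y₃ + a₃*y₃ = x₃^3 + a₂*x₃^2 + a₄*x₃ + a₆ := by
    have := (W.equation_iff x₃ y₃).mp hE₃'
    rw [ha₁, ha₂, ha₃, ha₄, ha₆] at this
    linear_combination this
  have hx₃ : x₃ = L^2 + (a₁:ℚ)*L - a₂ - x₁ - x₂ := by
    rw [hx₃def, addX, ha₁, ha₂]
  have hy₃ : y₃ = L*(x₃ - x₁) + y₁ := by
    rw [hy₃def, negAddY, ← hx₃def]
  have hslope : (x₁ = x₂ ∧ y₁ = y₂ ∧ L*(2*y₁ + (a₁:ℚ)*x₁ + a₃) = 3*x₁^2 + 2*a₂*x₁ + a₄ - a₁*y₁)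
      ∨ (x₁ ≠ x₂ ∧ L*(x₁ - x₂) = y₁ - y₂) := by
    by_cases hx : x₁ = x₂
    · left
      have hy' := hxy hx
      have hyy : y₁ = y₂ := Y_eq_of_Y_ne h₁.1 h₂.1 hx hy'
      refine ⟨hx, hyy, ?_⟩
      have hden : y₁ - W.negY x₁ y₁ ≠ 0 := by
        rw [sub_ne_zero]
        intro h
        exact hy' (by rw [h, hx, hyy])
      have hL : L = (3*x₁^2 + 2*W.a₂*x₁ + W.a₄ - W.a₁*y₁) / (y₁ - W.negY x₁ y₁) :=
        slope_of_Y_ne hx hy'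
      have hden' : 2*y₁ + (a₁:ℚ)*x₁ + a₃ = y₁ - W.negY x₁ y₁ := by
        rw [negY, ha₁, ha₃]; ring
      rw [hden', hL, div_mul_cancel₀ _ hden, ha₂, ha₄, ha₁]
    · right
      refine ⟨hx, ?_⟩
      rw [hLdef, slope_of_X_ne hx, div_mul_cancel₀ _ (sub_ne_zero.mpr hx)]
  -- Vieta coefficient identities via the factorisation of the addition polynomial
  have hcube : (⟨1, -L^2 - W.a₁*L + W.a₂,
        2*x₁*L^2 + (W.a₁*x₁ - 2*y₁ - W.a₃)*L + (-W.a₁*y₁ + W.a₄),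
        -x₁^2*L^2 + (2*x₁*y₁ + W.a₃*x₁)*L - (y₁^2 + W.a₃*y₁ - W.a₆)⟩ : Cubic ℚ)
      = ⟨1, -(x₁ + x₂ + x₃), x₁*x₂ + x₁*x₃ + x₂*x₃, -(x₁*x₂*x₃)⟩ := by
    apply (Cubic.toPoly_injective _ _).mp
    apply neg_inj.mp
    rw [← addPolynomial_eq, addPolynomial_slope h₁.1 h₂.1 (fun h => hxy h.1 h.2), Cubic.prod_X_sub_C_eq]
  have he₂raw : 2*x₁*L^2 + (W.a₁*x₁ - 2*y₁ - W.a₃)*L + (-W.a₁*y₁ + W.a₄)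
      = x₁*x₂ + x₁*x₃ + x₂*x₃ := congrArg Cubic.c hcube
  have he₃raw : -x₁^2*L^2 + (2*x₁*y₁ + W.a₃*x₁)*L - (y₁^2 + W.a₃*y₁ - W.a₆)
      = -(x₁*x₂*x₃) := congrArg Cubic.d hcube
  rw [ha₁, ha₃, ha₄] at he₂raw
  rw [ha₃, ha₆] at he₃raw
  have he₂ : x₁*x₂ + x₁*x₃ + x₂*x₃
      = (a₄:ℚ) - 2*L*(y₁ - L*x₁) - a₁*(y₁ - L*x₁) - a₃*L := by
    linear_combination -he₂raw
  have he₃ : x₁*x₂*x₃ = (y₁ - L*x₁)^2 + (a₃:ℚ)*(y₁ - L*x₁) - a₆ := by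
    linear_combination he₃raw
  exact addX_val_le a₁ a₂ a₃ a₄ a₆ hs hE₁ hE₂ hE₃ hx₃ hy₃ hslope he₂ he₃ hv₁ hv₂

open WeierstrassCurve.Affine in
/-- The `p`-adic filtration on rational points. -/
def Fil (p : ℕ) [Fact p.Prime] {W : WeierstrassCurve.Affine ℚ} (s : ℤ) : W.Point → Prop
  | .zero => True
  | @WeierstrassCurve.Affine.Point.some _ _ _ x _ _ => qv p x ≤ ((-2*s : ℤ) : WithTop ℤ)

open WeierstrassCurve.Affine in
@[simp] lemma Fil_zero {W : WeierstrassCurve.Affine ℚ} (s : ℤ) :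
    Fil p s (0 : W.Point) := trivial

open WeierstrassCurve.Affine in
@[simp] lemma Fil_some {W : WeierstrassCurve.Affine ℚ} (s : ℤ) {x y : ℚ}
    (h : W.Nonsingular x y) :
    Fil p s (WeierstrassCurve.Affine.Point.some x y h) ↔ qv p x ≤ ((-2*s : ℤ) : WithTop ℤ) :=
  Iff.rfl

open WeierstrassCurve.Affine in
lemma Fil_add {W : WeierstrassCurve.Affine ℚ} (a₁ a₂ a₃ a₄ a₆ : ℤ)
    (ha₁ : W.a₁ = a₁) (ha₂ : W.a₂ = a₂) (ha₃ : W.a₃ = a₃) (ha₄ : W.a₄ = a₄) (ha₆ : W.a₆ = a₆)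
    {s : ℤ} (hs : 1 ≤ s) {P₁ P₂ : W.Point} (h₁ : Fil p s P₁) (h₂ : Fil p s P₂) :
    Fil p s (P₁ + P₂) := by
  rcases P₁ with _ | @⟨x₁, y₁, hns₁⟩
  · rw [← WeierstrassCurve.Affine.Point.zero_def, zero_add]; exact h₂
  rcases P₂ with _ | @⟨x₂, y₂, hns₂⟩
  · rw [← WeierstrassCurve.Affine.Point.zero_def, add_zero]; exact h₁
  by_cases hxy : x₁ = x₂ ∧ y₁ = W.negY x₂ y₂
  · rw [WeierstrassCurve.Affine.Point.add_of_Y_eq hxy.1 hxy.2]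
    exact Fil_zero s
  · have hxy' : x₁ = x₂ → y₁ ≠ W.negY x₂ y₂ := fun hx hy => hxy ⟨hx, hy⟩
    rw [WeierstrassCurve.Affine.Point.add_some hxy]
    rw [Fil_some] at h₁ h₂ ⊢
    exact addX_val_le_W a₁ a₂ a₃ a₄ a₆ ha₁ ha₂ ha₃ ha₄ ha₆ hns₁ hns₂ hxy' hs h₁ h₂

open WeierstrassCurve.Affine in
lemma Fil_smul {W : WeierstrassCurve.Affine ℚ} (a₁ a₂ a₃ a₄ a₆ : ℤ)
    (ha₁ : W.a₁ = a₁) (ha₂ : W.a₂ = a₂) (ha₃ : W.a₃ = a₃) (ha₄ : W.a₄ = a₄) (ha₆ : W.a₆ = a₆)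
    {s : ℤ} (hs : 1 ≤ s) {P : W.Point} (h : Fil p s P) (k : ℕ) :
    Fil p s ((k : ℤ) • P) := by
  induction k with
  | zero => rw [Int.natCast_zero, zero_zsmul]; exact Fil_zero s
  | succ k ih =>
      have : ((k+1 : ℕ) : ℤ) • P = (k : ℤ) • P + P := by
        push_cast
        rw [add_zsmul, one_zsmul]
      rw [this]
      exact Fil_add a₁ a₂ a₃ a₄ a₆ ha₁ ha₂ ha₃ ha₄ ha₆ hs ih h

lemma qv_int_div_sq {A B : ℤ} (hA : A ≠ 0) (hB : B ≠ 0) :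
    qv p ((A : ℚ)/(B : ℚ)^2)
      = (((padicValInt p A : ℤ) - 2*(padicValInt p B : ℤ) : ℤ) : WithTop ℤ) := by
  have hA' : (A : ℚ) ≠ 0 := Int.cast_ne_zero.mpr hA
  have hB' : (B : ℚ) ≠ 0 := Int.cast_ne_zero.mpr hB
  rw [qv_div hA' (pow_ne_zero 2 hB'), padicValRat.pow (p := p) (q := (B : ℚ)), padicValRat.of_int,
    padicValRat.of_int]
  push_cast
  ring_nf

end Val

open WeierstrassCurve

/-- Divisibility property of the elliptic divisibility sequence attached to a non-torsion
rational point on an elliptic curve with integral Weierstrass coefficients. -/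
theorem stmt_0 (W : WeierstrassCurve.Affine ℚ)
    (hW : ∃ a₁ a₂ a₃ a₄ a₆ : ℤ, W.a₁ = a₁ ∧ W.a₂ = a₂ ∧ W.a₃ = a₃ ∧ W.a₄ = a₄ ∧ W.a₆ = a₆)
    (Q : W.Point) (hQ : ∀ n : ℤ, n ≠ 0 → n • Q ≠ 0)
    (A B : ℤ → ℤ)
    (hBpos : ∀ n : ℤ, n ≠ 0 → 0 < B n)
    (hcop : ∀ n : ℤ, n ≠ 0 → IsCoprime (A n) (B n))
    (hx : ∀ (n : ℤ), n ≠ 0 → ∀ (x y : ℚ) (h : W.Nonsingular x y),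
      n • Q = WeierstrassCurve.Affine.Point.some x y h → x = (A n : ℚ) / (B n : ℚ) ^ 2) :
    ∀ m n : ℤ, 0 < m → 0 < n → m ∣ n → B m ∣ B n := by
  obtain ⟨a₁, a₂, a₃, a₄, a₆, ha₁, ha₂, ha₃, ha₄, ha₆⟩ := hW
  intro m n hm hn hmn
  have hm0 : m ≠ 0 := by omega
  have hn0 : n ≠ 0 := by omega
  have hBm0 : B m ≠ 0 := (hBpos m hm0).ne'
  have hBn0 : B n ≠ 0 := (hBpos n hn0).ne'
  rw [← Int.natAbs_dvd_natAbs,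
    ← Nat.factorization_le_iff_dvd (Int.natAbs_ne_zero.mpr hBm0) (Int.natAbs_ne_zero.mpr hBn0),
    Finsupp.le_def]
  intro q
  by_cases hq : q.Prime
  · haveI : Fact q.Prime := ⟨hq⟩
    rw [Nat.factorization_def _ hq, Nat.factorization_def _ hq]
    show padicValInt q (B m) ≤ padicValInt q (B n)
    set e : ℕ := padicValInt q (B m) with he
    rcases Nat.eq_zero_or_pos e with he0 | hepos
    · omega
    -- `q` really divides `B m`
    have hqBm : (q : ℤ) ∣ B m :=
      dvd_trans (dvd_pow_self (q : ℤ) (by omega : e ≠ 0)) (padicValInt_dvd (B m))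
    have hAm0 : A m ≠ 0 := by
      intro h0
      have : IsUnit (B m) := (isCoprime_zero_left).mp (h0 ▸ hcop m hm0)
      rcases Int.isUnit_iff.mp this with h | h <;>
        · rw [h] at he
          simp [padicValInt] at he
          omega
    have hqAm : ¬ (q : ℤ) ∣ A m := by
      intro hdvd
      have : IsUnit (q : ℤ) := (hcop m hm0).isUnit_of_dvd' hdvd hqBm
      rcases Int.isUnit_iff.mp this with h | h <;>
        · have := hq.two_le; omega
    have hvAm : padicValInt q (A m) = 0 := padicValInt.eq_zero_of_not_dvd hqAm
    -- the point m • Q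
    have hQm := hQ m hm0
    rcases hPm : m • Q with _ | @⟨xm, ym, hnsm⟩
    · exact absurd hPm hQm
    have hxm : xm = (A m : ℚ) / (B m : ℚ) ^ 2 := hx m hm0 xm ym hnsm hPm
    have hqxm : qv q xm = (((-2*(e:ℤ)) : ℤ) : WithTop ℤ) := by
      rw [hxm, qv_int_div_sq hAm0 hBm0, hvAm, ← he]
      norm_num
    have hFm : Fil q (e : ℤ) (m • Q) := by
      rw [hPm, Fil_some, hqxm]
    -- push the filtration to n • Q
    have hk : n = m * (n / m) := (Int.ediv_mul_cancel hmn).symm.trans (mul_comm _ _)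
    have hkpos : 0 < n / m := by
      rcases hmn with ⟨c, rfl⟩
      rw [Int.mul_ediv_cancel_left _ hm0]
      nlinarith
    have hFn : Fil q (e : ℤ) (n • Q) := by
      have hnsmul : n • Q = ((n/m).toNat : ℤ) • (m • Q) := by
        rw [← mul_smul, Int.toNat_of_nonneg hkpos.le]
        congr 1
        rw [mul_comm]
        exact hk
      rw [hnsmul]
      exact Fil_smul a₁ a₂ a₃ a₄ a₆ ha₁ ha₂ ha₃ ha₄ ha₆ (by omega : 1 ≤ (e:ℤ)) hFm _
    rcases hPn : n • Q with _ | @⟨xn, yn, hnsn⟩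
    · exact absurd hPn (hQ n hn0)
    rw [hPn, Fil_some] at hFn
    have hxn : xn = (A n : ℚ) / (B n : ℚ) ^ 2 := hx n hn0 xn yn hnsn hPn
    have hAn0 : A n ≠ 0 := by
      intro h0
      rw [hxn, h0] at hFn
      simp only [Int.cast_zero, zero_div, qv_zero] at hFn
      exact WithTop.not_top_le_coe _ hFn
    rw [hxn, qv_int_div_sq hAn0 hBn0] at hFn
    have := WithTop.coe_le_coe.mp hFn
    omega
  · rw [Nat.factorization_eq_zero_of_not_prime _ hq]
    exact Nat.zero_le _
end

section
/- Let E be the elliptic curve y² = x³ − x² − 4x − 2 over ℚ and Q = (3, 2) ∈ E(ℚ). Let a be a root of a² − 4a − 4 = 0 and R a point on E with x(R) = a. Then 2R = ±Q; in particular Q is magnified from a point generating a quadratic extension of ℚ. -/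
open WeierstrassCurve WeierstrassCurve.Affine Polynomial

lemma some_eq_some' {F : Type*} [Field F] {W : WeierstrassCurve.Affine F}
    {x₁ y₁ x₂ y₂ : F} (hx : x₁ = x₂) (hy : y₁ = y₂)
    (h : W.Nonsingular x₁ y₁) (h' : W.Nonsingular x₂ y₂) :
    WeierstrassCurve.Affine.Point.some _ _ h = WeierstrassCurve.Affine.Point.some _ _ h' := by
  subst hx hy; rfl

open Classical in
/-- On the curve `y² = x³ − x² − 4x − 2` with `Q = (3, 2)`, if `a` is a root of
`a² − 4a − 4 = 0` (generating a quadratic extension of `ℚ`) and `R` is a point with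
`x(R) = a`, then `2R = ±Q`; in particular `Q` is magnified from a point generating a
quadratic extension. -/
theorem stmt_13 {F : Type*} [Field F] [Algebra ℚ F]
    (a : F) (ha : a ^ 2 - 4 * a - 4 = 0)
    (hairr : ∀ q : ℚ, algebraMap ℚ F q ≠ a)
    (hgen : Algebra.adjoin ℚ {a} = ⊤)
    (W : WeierstrassCurve.Affine F)
    (hW : W = { a₁ := 0, a₂ := -1, a₃ := 0, a₄ := -4, a₆ := -2 })
    (hQ : W.Nonsingular 3 2)
    (y : F) (hR : W.Nonsingular a y) :
    (2 • WeierstrassCurve.Affine.Point.some _ _ hR = WeierstrassCurve.Affine.Point.some _ _ hQ ∨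
      2 • WeierstrassCurve.Affine.Point.some _ _ hR = -WeierstrassCurve.Affine.Point.some _ _ hQ) ∧
    Module.finrank ℚ F = 2 := by
  haveI : CharZero F := charZero_of_injective_algebraMap (algebraMap ℚ F).injective
  have hWdef := hW
  have heq := hR.1
  rw [WeierstrassCurve.Affine.equation_iff] at heq
  have hy2 : y ^ 2 = 12 * a + 10 := by
    simp only [hWdef] at heq
    linear_combination heq + (a + 3) * ha
  have hQne : (12 : F) * a + 10 ≠ 0 := by
    intro h
    refine hairr (-5/6) ?_
    rw [eq_ratCast]
    push_cast
    linear_combination (-1/12 : F) * h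
  have hyne : y ≠ 0 := by
    intro h
    rw [h] at hy2
    exact hQne (by linear_combination -hy2)
  have hneg : W.negY a y = -y := by simp [negY, hWdef]
  have hy' : y ≠ W.negY a y := by
    rw [hneg]
    intro h
    exact hyne (by
      have h2 : (2 : F) * y = 0 := by linear_combination h
      exact (mul_eq_zero.mp h2).resolve_left two_ne_zero)
  set t := W.slope a a y y with htdef
  have hts : t = (3 * a ^ 2 - 2 * a - 4) / (2 * y) := by
    rw [htdef, slope_of_Y_ne rfl hy', hneg]
    simp [hWdef]
    ring_nf
  have h2yt : 2 * y * t = 10 * a + 8 := by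
    rw [hts]
    field_simp
    linear_combination 3 * ha
  have ht2 : t ^ 2 = 2 * a + 2 := by
    have h4 : t ^ 2 * (4 * y ^ 2) = (2 * a + 2) * (4 * y ^ 2) := by
      linear_combination (2 * y * t + 10 * a + 8) * h2yt - (8 * a + 8) * hy2 + 4 * ha
    exact mul_right_cancel₀ (by simpa using pow_ne_zero 2 hyne) h4
  have hx3 : W.addX a a t = 3 := by
    simp only [addX, hWdef]
    linear_combination ht2
  have hy3 : (W.addY a a y t - 2) * (W.addY a a y t + 2) = 0 := by
    have hu : W.addY a a y t = -(t * (3 - a) + y) := by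
      simp only [addY, negAddY, negY, hx3]
      simp only [hWdef]
      ring
    rw [hu]
    linear_combination (3 - a) ^ 2 * ht2 + (3 - a) * h2yt + hy2 + (2 * a - 12) * ha
  have hadd : (2 : ℕ) • WeierstrassCurve.Affine.Point.some _ _ hR =
      WeierstrassCurve.Affine.Point.some _ _ (nonsingular_add hR hR fun hxy => hy' hxy.right) := by
    rw [two_nsmul, WeierstrassCurve.Affine.Point.add_self_of_Y_ne hy']
  constructor
  · rcases mul_eq_zero.mp hy3 with h | h
    · left
      rw [hadd]
      refine some_eq_some' hx3 ?_ _ _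
      show W.addY a a y t = 2
      linear_combination h
    · right
      rw [hadd, WeierstrassCurve.Affine.Point.neg_some]
      refine some_eq_some' hx3 ?_ _ _
      show W.addY a a y t = W.negY 3 2
      have hn2 : W.negY 3 2 = -2 := by simp only [hWdef, negY]; norm_num
      rw [hn2]
      linear_combination h
  · -- finrank part
    set p : ℚ[X] := X ^ 2 - 4 * X - 4 with hp
    have hmonic : p.Monic := by
      unfold p; monicity!
    have hdeg : p.natDegree = 2 := by
      unfold p; compute_degree!
    have haev : (Polynomial.aeval a) p = 0 := by
      simp only [hp, map_sub, map_mul, map_ofNat, aeval_X, map_pow]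
      linear_combination ha
    have hint : IsIntegral ℚ a := ⟨p, hmonic, haev⟩
    have hroots : p.roots = 0 := by
      rw [Multiset.eq_zero_iff_forall_notMem]
      intro q hq
      have hq' : q ^ 2 - 4 * q - 4 = 0 := by
        have := isRoot_of_mem_roots hq
        simpa [hp, IsRoot, sub_eq_zero, pow_two] using this
      set r : F := algebraMap ℚ F q with hr
      have hrF : r ^ 2 - 4 * r - 4 = 0 := by
        have := congrArg (algebraMap ℚ F) hq'
        push_cast at this
        simpa [hr] using this
      have hfac : (r - a) * (r - (4 - a)) = 0 := by
        linear_combination hrF - ha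
      rcases mul_eq_zero.mp hfac with h | h
      · exact hairr q (by rw [← hr]; linear_combination h)
      · refine hairr (4 - q) ?_
        rw [map_sub, map_ofNat, ← hr]
        linear_combination -h
    have hirr : Irreducible p :=
      (hmonic.irreducible_iff_roots_eq_zero_of_degree_le_three
        (by omega) (by omega)).mpr hroots
    have hmin : minpoly ℚ a = p := (minpoly.eq_of_irreducible_of_monic hirr haev hmonic).symm
    have htop : IntermediateField.adjoin ℚ {a} = ⊤ :=
      IntermediateField.adjoin_eq_top_of_algebra (hS := hgen)
    have hfr := IntermediateField.adjoin.finrank hint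
    rw [hmin, hdeg] at hfr
    rw [htop, IntermediateField.finrank_top'] at hfr
    exact hfr
end

section
/- Let E be an elliptic curve over ℚ, Q ∈ E(ℚ) non-torsion with associated elliptic divisibility sequence B_n (where x(nQ) = A_n/B_n² in lowest terms), and let ψ_n(Q) be the value at Q of the n-th division polynomial (with Q an integral point). Then B_n divides ψ_n(Q) for all n ≥ 1; consequently, if only finitely many B_n have at most l distinct prime factors, the same holds for ψ_n(Q). -/
open WeierstrassCurve WeierstrassCurve.Affine Polynomial

/-- For an integral non-torsion point `Q` on an elliptic curve over `ℚ` with integral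
coefficients, `B_n` divides `ψ_n(Q)` (the value of the `n`-th division polynomial at `Q`,
with `x(nQ) = φ_n(Q)/ψ_n(Q)²`); hence if only finitely many `B_n` have at most `l` distinct
prime factors, the same holds for `ψ_n(Q)`. -/
theorem stmt_18 (W : WeierstrassCurve.Affine ℚ)
    (hW : ∃ a₁ a₂ a₃ a₄ a₆ : ℤ, W.a₁ = a₁ ∧ W.a₂ = a₂ ∧ W.a₃ = a₃ ∧ W.a₄ = a₄ ∧ W.a₆ = a₆)
    (x₀ y₀ : ℤ) (h₀ : W.Nonsingular (x₀ : ℚ) (y₀ : ℚ))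
    (hQ : ∀ n : ℤ, n ≠ 0 → n • (WeierstrassCurve.Affine.Point.some _ _ h₀) ≠ 0)
    (ψ φd : ℕ → ℤ)
    (hψ : ∀ n : ℕ, ((W.Ψ (n : ℤ)).evalEval (x₀ : ℚ) (y₀ : ℚ)) = (ψ n : ℚ))
    (hφψ : ∀ n : ℕ, 1 ≤ n → ψ n ≠ 0 ∧
      ∀ (x y : ℚ) (h : W.Nonsingular x y),
        (n : ℤ) • (WeierstrassCurve.Affine.Point.some _ _ h₀) =
          WeierstrassCurve.Affine.Point.some _ _ h →
        x = (φd n : ℚ) / (ψ n : ℚ) ^ 2)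
    (A B : ℕ → ℤ)
    (hBpos : ∀ n : ℕ, 1 ≤ n → 0 < B n)
    (hcop : ∀ n : ℕ, 1 ≤ n → IsCoprime (A n) (B n))
    (hx : ∀ (n : ℕ), 1 ≤ n → ∀ (x y : ℚ) (h : W.Nonsingular x y),
      (n : ℤ) • (WeierstrassCurve.Affine.Point.some _ _ h₀) =
        WeierstrassCurve.Affine.Point.some _ _ h →
      x = (A n : ℚ) / (B n : ℚ) ^ 2) :
    (∀ n : ℕ, 1 ≤ n → B n ∣ ψ n) ∧
    ∀ l : ℕ,
      {n : ℕ | 1 ≤ n ∧ (B n).natAbs.primeFactors.card ≤ l}.Finite →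
      {n : ℕ | 1 ≤ n ∧ (ψ n).natAbs.primeFactors.card ≤ l}.Finite := by

  have key : ∀ n : ℕ, 1 ≤ n → B n ∣ ψ n := by
    intro n hn
    have hn0 : (n : ℤ) ≠ 0 := by exact_mod_cast Nat.one_le_iff_ne_zero.mp hn
    have hP := hQ n hn0
    rcases hPeq : (n : ℤ) • (WeierstrassCurve.Affine.Point.some _ _ h₀) with _ | @⟨x, y, h⟩
    · exact absurd hPeq hP
    · have h1 := (hφψ n hn).2 x y h hPeq
      have hψ0 : (ψ n : ℚ) ≠ 0 := by exact_mod_cast (hφψ n hn).1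
      have hB0 : (B n : ℚ) ≠ 0 := by exact_mod_cast (hBpos n hn).ne'
      have h2 := hx n hn x y h hPeq
      have h3 : (A n : ℚ) * (ψ n : ℚ) ^ 2 = (φd n : ℚ) * (B n : ℚ) ^ 2 := by
        field_simp at h1 h2
        rw [← h2, ← h1]
        ring
      have h4 : A n * ψ n ^ 2 = φd n * B n ^ 2 := by exact_mod_cast h3
      have h5 : B n ^ 2 ∣ A n * ψ n ^ 2 := h4 ▸ Dvd.intro_left _ rfl
      have h6 : B n ^ 2 ∣ ψ n ^ 2 :=
        ((hcop n hn).symm.pow_left).dvd_of_dvd_mul_left h5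
      exact (Int.pow_dvd_pow_iff two_ne_zero).mp h6
  refine ⟨key, fun l hfin => hfin.subset fun n hn => ?_⟩
  obtain ⟨hn1, hcard⟩ := hn
  refine ⟨hn1, le_trans (Finset.card_le_card ?_) hcard⟩
  apply Nat.primeFactors_mono
  · exact Int.natAbs_dvd_natAbs.mpr (key n hn1)
  · exact Int.natAbs_ne_zero.mpr (hφψ n hn1).1
end
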